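/- Let J be closed and φ ∈ J*. If there is no 4-chain (i,j,k,l) ∈ 𝒫 with (i,j) ∈ supp(φ) and (k,l) ∈ supp(φ), then the superclass {x_ρ : ρ ∈ O_φ} of x_φ is a single conjugacy class of U_J. -/

import Mathlib

/-!
Write `1 + u * X_φ * v = u * (1 + X_φ * (v * u)) * u⁻¹`; it then suffices to conjugate `x_φ` to
`1 + X_φ * w` for every `w = 1 + W ∈ U_J`. Let `D` be the diagonal projection onto the
coordinates `k` that occur as heads `(i, k)` of the support of `φ`, and `W₁ = D * W`. Then
`X_φ * W₁ = X_φ * W`, while `W₁ * X_φ = 0` because a nonzero entry of it would produce a chain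
`(i, k, l, m)` with `φ_{ik} ≠ 0 ≠ φ_{lm}`. Hence
`(1 + W₁)⁻¹ * x_φ * (1 + W₁) = 1 + X_φ * (1 + W₁) = 1 + X_φ * w`.
The inverses used stay in `U_J`: it is a submonoid of the finite monoid of matrices, and its
elements are units (unitriangular, so of determinant one), whose inverses are powers of themselves.
-/

open Matrix BigOperators

namespace SCT

/-- Pairs of indices. -/
abbrev Pr (n : ℕ) := Fin n × Fin n

/-- A closed subset `J ⊆ {(i,j) : i < j}`:  `(i,j) ∈ J` and `(j,k) ∈ J` imply `(i,k) ∈ J`. -/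
def Closed {n : ℕ} (J : Finset (Pr n)) : Prop :=
  (∀ p ∈ J, p.1 < p.2) ∧
  ∀ i j k : Fin n, (i, j) ∈ J → (j, k) ∈ J → (i, k) ∈ J

variable {F : Type*} [Field F] [Fintype F] [DecidableEq F] {n : ℕ}

/-- `X_φ = Σ_{(i,j) ∈ J} φ_{ij} X_{ij}`. -/
def Xmat (J : Finset (Pr n)) (φ : Pr n → F) : Matrix (Fin n) (Fin n) F :=
  Matrix.of fun i j => if (i, j) ∈ J then φ (i, j) else 0

/-- `x_φ = 1 + X_φ`. -/
def xmat (J : Finset (Pr n)) (φ : Pr n → F) : Matrix (Fin n) (Fin n) F :=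
  1 + Xmat J φ

/-- `x_{ij}(t) = 1 + t X_{ij}`. -/
def xelt (i j : Fin n) (t : F) : Matrix (Fin n) (Fin n) F :=
  1 + Matrix.single i j t

/-- The pattern group `U_J`, as a set of matrices: ones on the diagonal, entries off the
diagonal vanish outside `J`. -/
def UJ (J : Finset (Pr n)) : Set (Matrix (Fin n) (Fin n) F) :=
  {M | (∀ i, M i i = 1) ∧ ∀ i j : Fin n, i ≠ j → (i, j) ∉ J → M i j = 0}

/-- `𝔫_J`: matrices supported on `J`. -/
def nJset (J : Finset (Pr n)) : Set (Matrix (Fin n) (Fin n) F) :=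
  {M | ∀ i j : Fin n, (i, j) ∉ J → M i j = 0}

/-- The functional `λ_η` evaluated at a matrix of `𝔫_J`. -/
def lam (J : Finset (Pr n)) (η : Pr n → F) (X : Matrix (Fin n) (Fin n) F) : F :=
  ∑ p ∈ J, η p * X p.1 p.2

/-- A functional with coefficients indexed by `J` evaluated at a matrix. -/
def lamSub (J : Finset (Pr n)) (η : {p // p ∈ J} → F) (X : Matrix (Fin n) (Fin n) F) : F :=
  ∑ p ∈ J.attach, η p * X p.1.1 p.1.2

/-- The two-sided orbit `O_φ = U_J X_φ U_J ⊆ 𝔫_J`. -/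
def biOrbit (J : Finset (Pr n)) (φ : Pr n → F) : Set (Matrix (Fin n) (Fin n) F) :=
  {Y | ∃ u v : Matrix (Fin n) (Fin n) F, u ∈ UJ J ∧ v ∈ UJ J ∧ Y = u * Xmat J φ * v}

/-- `(M_φ^R)_{(i,l),(j,k)} = φ_{ij}` if `k = l` and `(i,j,l) ∈ 𝒫`, else `0`. -/
def MphiR (J : Finset (Pr n)) (φ : Pr n → F) : Matrix {p // p ∈ J} {p // p ∈ J} F :=
  Matrix.of fun p q =>
    if q.1.2 = p.1.2 ∧ (p.1.1, q.1.1) ∈ J ∧ (q.1.1, p.1.2) ∈ J then φ (p.1.1, q.1.1) else 0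

/-- `(M_φ^L)_{(i,l),(j,k)} = φ_{kl}` if `i = j` and `(i,k,l) ∈ 𝒫`, else `0`. -/
def MphiL (J : Finset (Pr n)) (φ : Pr n → F) : Matrix {p // p ∈ J} {p // p ∈ J} F :=
  Matrix.of fun p q =>
    if q.1.1 = p.1.1 ∧ (p.1.1, q.1.2) ∈ J ∧ (q.1.2, p.1.2) ∈ J then φ (q.1.2, p.1.2) else 0

/-- `(M_L^η)_{(j,k),(i,l)} = η_{ik}` if `l = j` and `(i,j,k) ∈ 𝒫`, else `0`. -/
def MetaL (J : Finset (Pr n)) (η : Pr n → F) : Matrix {p // p ∈ J} {p // p ∈ J} F :=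
  Matrix.of fun p q =>
    if q.1.2 = p.1.1 ∧ (q.1.1, p.1.1) ∈ J ∧ (p.1.1, p.1.2) ∈ J then η (q.1.1, p.1.2) else 0

/-- `(M_R^η)_{(j,k),(i,l)} = η_{jl}` if `k = i` and `(j,k,l) ∈ 𝒫`, else `0`. -/
def MetaR (J : Finset (Pr n)) (η : Pr n → F) : Matrix {p // p ∈ J} {p // p ∈ J} F :=
  Matrix.of fun p q =>
    if q.1.1 = p.1.2 ∧ (p.1.1, p.1.2) ∈ J ∧ (p.1.2, q.1.2) ∈ J then η (p.1.1, q.1.2) else 0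

/-- `corank(η) = rank(M_L^η)`. -/
noncomputable def corank (J : Finset (Pr n)) (η : Pr n → F) : ℕ := (MetaL J η).rank

/-- `(M_φ^η)_{(i,j),(k,l)} = φ_{jk} η_{il}` if `(i,j,k,l) ∈ 𝒫`, else `0`. -/
def Mmesh (J : Finset (Pr n)) (φ η : Pr n → F) : Matrix {p // p ∈ J} {p // p ∈ J} F :=
  Matrix.of fun p q =>
    if (p.1.2, q.1.1) ∈ J then φ (p.1.2, q.1.1) * η (p.1.1, q.1.2) else 0

/-- `(a_φ^η)_{(i,j)} = Σ_{(i,j,k) ∈ 𝒫} φ_{jk} η_{ik}`. -/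
def aVec (J : Finset (Pr n)) (φ η : Pr n → F) : {p // p ∈ J} → F :=
  fun p => ∑ k : Fin n, if (p.1.2, k) ∈ J then φ (p.1.2, k) * η (p.1.1, k) else 0

/-- `(b_φ^η)_{(j,k)} = Σ_{(i,j,k) ∈ 𝒫} φ_{ij} η_{ik}`. -/
def bVec (J : Finset (Pr n)) (φ η : Pr n → F) : {p // p ∈ J} → F :=
  fun p => ∑ i : Fin n, if (i, p.1.1) ∈ J then φ (i, p.1.1) * η (i, p.1.2) else 0

/-- `φ` meshes with `η`. -/
def Meshes (J : Finset (Pr n)) (φ η : Pr n → F) : Prop :=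
  (∃ b : {p // p ∈ J} → F, (Mmesh J φ η).mulVec b = -aVec J φ η) ∧
  ∀ v : {p // p ∈ J} → F, (Mmesh J φ η).mulVec v = 0 → bVec J φ η ⬝ᵥ v = 0

/-- The supercharacter `χ^η` evaluated at `x_φ`. -/
noncomputable def superchar (J : Finset (Pr n)) (θ : AddChar F ℂ) (η φ : Pr n → F) : ℂ :=
  ((Fintype.card F : ℂ) ^ corank J η / (Nat.card (biOrbit J φ) : ℂ)) *
    ∑ᶠ Y ∈ biOrbit J φ, (starRingEnd ℂ) (θ (lam J η Y))

/-- `χ` restricted to `U` is the character of an irreducible complex representation of `U`. -/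
def IsIrredCharOn (U : Set (Matrix (Fin n) (Fin n) F))
    (χ : Matrix (Fin n) (Fin n) F → ℂ) : Prop :=
  ∃ d : ℕ, 0 < d ∧ ∃ ρ : Matrix (Fin n) (Fin n) F → Matrix (Fin d) (Fin d) ℂ,
    ρ 1 = 1 ∧
    (∀ A ∈ U, ∀ B ∈ U, ρ (A * B) = ρ A * ρ B) ∧
    (∀ W : Submodule ℂ (Fin d → ℂ), (∀ A ∈ U, ∀ w ∈ W, (ρ A).mulVec w ∈ W) → W = ⊥ ∨ W = ⊤) ∧
    ∀ A ∈ U, (ρ A).trace = χ A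

/-- The full set of positive roots. -/
def Jfull (n : ℕ) : Finset (Pr n) := Finset.univ.filter fun p : Pr n => p.1 < p.2

/-!  The total order and partial sum on positive roots. -/

/-- `α < β` in the total order: `(r,s) < (i,j)` iff `r > i`, or `r = i` and `s > j`. -/
def rlt {n : ℕ} (a b : Pr n) : Prop := b.1 < a.1 ∨ (a.1 = b.1 ∧ b.2 < a.2)

/-- `α + β` is defined in `R⁺`. -/
def rdef {n : ℕ} (a b : Pr n) : Prop := a.2 = b.1 ∨ b.2 = a.1

/-- The sum `α + β` (when defined). -/
def rsum {n : ℕ} (a b : Pr n) : Pr n := if a.2 = b.1 then (a.1, b.2) else (b.1, a.2)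

/-! Algebra groups. -/

/-- The algebra group `H = 1 + 𝔫`. -/
def algH (nn : Submodule F (Matrix (Fin n) (Fin n) F)) : Set (Matrix (Fin n) (Fin n) F) :=
  {M | ∃ X ∈ nn, M = 1 + X}

/-- The two sided orbit `H X H ⊆ 𝔫` of `X`. -/
def algBiOrbit (nn : Submodule F (Matrix (Fin n) (Fin n) F))
    (X : Matrix (Fin n) (Fin n) F) : Set nn :=
  {Y | ∃ u ∈ algH nn, ∃ v ∈ algH nn, (Y : Matrix (Fin n) (Fin n) F) = u * X * v}

/-- The right orbit `{λ · u : u ∈ H} ⊆ 𝔫*` of a functional `λ`, described via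
`λ' = λ · u⁻¹ ↔ (∀ Y, λ' Y = λ (Y u))`. -/
def algRightOrbit (nn : Submodule F (Matrix (Fin n) (Fin n) F))
    (l : Module.Dual F nn) : Set (Module.Dual F nn) :=
  {l' | ∃ u ∈ algH nn, ∀ (Y : nn) (h : (Y : Matrix (Fin n) (Fin n) F) * u ∈ nn),
      l' Y = l ⟨(Y : Matrix (Fin n) (Fin n) F) * u, h⟩}

/-- The supercharacter `χ^λ` of an algebra group, evaluated at `1 + X`. -/
noncomputable def algSuperchar (nn : Submodule F (Matrix (Fin n) (Fin n) F))
    (θ : AddChar F ℂ) (l : Module.Dual F nn) (X : Matrix (Fin n) (Fin n) F) : ℂ :=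
  ((Nat.card (algRightOrbit nn l) : ℂ) / (Nat.card (algBiOrbit nn X) : ℂ)) *
    ∑ᶠ Y ∈ algBiOrbit nn X, (starRingEnd ℂ) (θ (l Y))

/-! Algebra groups with a fixed basis `X_1, …, X_d` of `𝔫`. -/

/-- `X_ρ = Σ_i ρ_i X_i`. -/
def bigX {d : ℕ} (Xb : Fin d → Matrix (Fin n) (Fin n) F) (ρ : Fin d → F) :
    Matrix (Fin n) (Fin n) F :=
  ∑ i : Fin d, ρ i • Xb i

/-- The two-sided orbit of `X_φ`, in coordinates. -/
def algCoeffBiOrbit {d : ℕ} (Xb : Fin d → Matrix (Fin n) (Fin n) F) (φ : Fin d → F) :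
    Set (Fin d → F) :=
  {ρ | ∃ ζ₁ ζ₂ : Fin d → F,
      (1 + bigX Xb ζ₁) * bigX Xb φ * (1 + bigX Xb ζ₂) = bigX Xb ρ}

/-- The right orbit of `λ_η`, in coordinates (`λ_η(X_ν) = η ⬝ᵥ ν`). -/
def algCoeffRightOrbit {d : ℕ} (Xb : Fin d → Matrix (Fin n) (Fin n) F) (η : Fin d → F) :
    Set (Fin d → F) :=
  {η' | ∃ ζ : Fin d → F, ∀ ρ ν : Fin d → F,
      bigX Xb ρ * (1 + bigX Xb ζ) = bigX Xb ν → η' ⬝ᵥ ρ = η ⬝ᵥ ν}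

/-- The supercharacter `χ^η` of an algebra group with fixed basis, evaluated at `x_φ`. -/
noncomputable def algCoeffSuperchar {d : ℕ} (Xb : Fin d → Matrix (Fin n) (Fin n) F)
    (θ : AddChar F ℂ) (η φ : Fin d → F) : ℂ :=
  ((Nat.card (algCoeffRightOrbit Xb η) : ℂ) / (Nat.card (algCoeffBiOrbit Xb φ) : ℂ)) *
    ∑ᶠ ρ ∈ algCoeffBiOrbit Xb φ, (starRingEnd ℂ) (θ (η ⬝ᵥ ρ))

/-- `(C_i)_{jk} = c_{ij}^k`. -/
def Cleft {d : ℕ} (c : Fin d → Fin d → Fin d → F) (i : Fin d) : Matrix (Fin d) (Fin d) F :=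
  Matrix.of fun j k => c i j k

/-- `(C^j)_{ik} = c_{ij}^k`. -/
def Cright {d : ℕ} (c : Fin d → Fin d → Fin d → F) (j : Fin d) : Matrix (Fin d) (Fin d) F :=
  Matrix.of fun i k => c i j k

/-- `(M_φ^η)_{ij} = φ C_i C^j η`. -/
def algMmesh {d : ℕ} (c : Fin d → Fin d → Fin d → F) (φ η : Fin d → F) :
    Matrix (Fin d) (Fin d) F :=
  Matrix.of fun i j => φ ⬝ᵥ (Cleft c i * Cright c j).mulVec η

/-- `(a_φ^η)_i = φ C_i η`. -/
def algAVec {d : ℕ} (c : Fin d → Fin d → Fin d → F) (φ η : Fin d → F) : Fin d → F :=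
  fun i => φ ⬝ᵥ (Cleft c i).mulVec η

/-- `(b_φ^η)_j = φ C^j η`. -/
def algBVec {d : ℕ} (c : Fin d → Fin d → Fin d → F) (φ η : Fin d → F) : Fin d → F :=
  fun j => φ ⬝ᵥ (Cright c j).mulVec η

/-- `φ` meshes with `η` (algebra-group version). -/
def algMeshes {d : ℕ} (c : Fin d → Fin d → Fin d → F) (φ η : Fin d → F) : Prop :=
  (∃ b : Fin d → F, (algMmesh c φ η).mulVec b = -algAVec c φ η) ∧
  ∀ v : Fin d → F, (algMmesh c φ η).mulVec v = 0 → algBVec c φ η ⬝ᵥ v = 0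


end SCT

theorem Submonoid.exists_mul_eq_one_of_isUnit {M : Type*} [Monoid M] [Finite M]
    (S : Submonoid M) {m : M} (hm : m ∈ S) (hu : IsUnit m) :
    ∃ m' ∈ S, m * m' = 1 ∧ m' * m = 1 := by
  obtain ⟨u, rfl⟩ := hu
  obtain ⟨k, hk⟩ : u⁻¹ ∈ Submonoid.powers u :=
    mem_powers_iff_mem_zpowers.2 (inv_mem (Subgroup.mem_zpowers u))
  refine ⟨↑u⁻¹, ?_, u.mul_inv, u.inv_mul⟩
  rw [← hk, Units.val_pow_eq_pow_val]
  exact S.pow_mem hm k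

theorem mul_one_add_mul_of_mul_eq_one {R : Type*} [Ring R] {g h : R} (hgh : g * h = 1) (X : R) :
    g * (1 + X) * h = 1 + g * X * h := by
  rw [mul_add, mul_one, add_mul, hgh]

theorem conj_one_add_eq_one_add_mul {R : Type*} [Ring R] {X W E k : R}
    (hXE : X * E = X * W) (hEX : E * X = 0) (hk : k * (1 + E) = 1) :
    k * (1 + X) * (1 + E) = 1 + X * (1 + W) := by
  have hkX : k * X = X := by
    calc k * X = k * ((1 + E) * X) := by rw [add_mul, hEX, one_mul, add_zero]
      _ = X := by rw [← mul_assoc, hk, one_mul]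
  calc k * (1 + X) * (1 + E) = k * (1 + E) + k * X * (1 + E) := by noncomm_ring
    _ = 1 + X * (1 + W) := by rw [hk, hkX, mul_add, mul_add, hXE]

namespace SCT

variable {F : Type*} [Field F] {n : ℕ} {J : Finset (Pr n)}

theorem mul_mem_nJset (hJ : Closed J) {A B : Matrix (Fin n) (Fin n) F} (hA : A ∈ nJset J)
    (hB : B ∈ nJset J) : A * B ∈ nJset J := by
  intro i j hij
  refine (mul_apply (M := A)).trans (Finset.sum_eq_zero fun k _ => ?_)
  by_cases hik : (i, k) ∈ J
  · rw [hB k j fun hkj => hij (hJ.2 i k j hik hkj), mul_zero]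
  · rw [hA i k hik, zero_mul]

theorem mem_UJ_iff (hJ : Closed J) {M : Matrix (Fin n) (Fin n) F} :
    M ∈ UJ J ↔ M - 1 ∈ nJset J := by
  have hdiag : ∀ i, (i, i) ∉ J := fun i hi => lt_irrefl i (hJ.1 _ hi)
  constructor
  · rintro ⟨hone, hoff⟩ i j hij
    rcases eq_or_ne i j with rfl | hne
    · simp [hone]
    · simp [hoff i j hne hij, hne]
  · intro hM
    refine ⟨fun i => ?_, fun i j hne hij => ?_⟩
    · simpa [sub_eq_zero] using hM i i (hdiag i)
    · simpa [hne] using hM i j hij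

theorem one_mem_UJ (hJ : Closed J) : (1 : Matrix (Fin n) (Fin n) F) ∈ UJ J :=
  (mem_UJ_iff hJ).2 (by simp [nJset])

theorem mul_mem_UJ (hJ : Closed J) {M N : Matrix (Fin n) (Fin n) F} (hM : M ∈ UJ J)
    (hN : N ∈ UJ J) : M * N ∈ UJ J := by
  rw [mem_UJ_iff hJ] at hM hN ⊢
  have hprod := mul_mem_nJset hJ hM hN
  have : M * N - 1 = (M - 1) + (N - 1) + (M - 1) * (N - 1) := by noncomm_ring
  intro i j hij
  rw [this, Matrix.add_apply, Matrix.add_apply, hM i j hij, hN i j hij, hprod i j hij,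
    add_zero, add_zero]

def patternSubmonoid (hJ : Closed J) : Submonoid (Matrix (Fin n) (Fin n) F) where
  carrier := UJ J
  one_mem' := one_mem_UJ hJ
  mul_mem' := mul_mem_UJ hJ

theorem det_eq_one_of_mem_UJ (hJ : Closed J) {M : Matrix (Fin n) (Fin n) F} (hM : M ∈ UJ J) :
    M.det = 1 := by
  have hupper : M.IsUpperTriangular := fun i j hji =>
    hM.2 i j hji.ne' fun hij => lt_asymm hji (hJ.1 _ hij)
  simp [Matrix.det_of_isUpperTriangular hupper, hM.1]

theorem exists_inv_mem_UJ [Fintype F] (hJ : Closed J) {M : Matrix (Fin n) (Fin n) F}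
    (hM : M ∈ UJ J) : ∃ M' ∈ UJ J, M * M' = 1 ∧ M' * M = 1 :=
  (patternSubmonoid hJ).exists_mul_eq_one_of_isUnit hM <|
    (Matrix.isUnit_iff_isUnit_det M).2 (by simp [det_eq_one_of_mem_UJ hJ hM])

variable {φ : Pr n → F}

theorem Xmat_mul_diagonal {d : Fin n → F} (hd : ∀ i k, (i, k) ∈ J → φ (i, k) ≠ 0 → d k = 1) :
    Xmat J φ * diagonal d = Xmat J φ := by
  ext i k
  rw [mul_diagonal]
  by_cases h : (i, k) ∈ J ∧ φ (i, k) ≠ 0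
  · rw [hd i k h.1 h.2, mul_one]
  · have : Xmat J φ i k = 0 := by
      by_cases hik : (i, k) ∈ J
      · simpa [Xmat, hik] using h
      · simp [Xmat, hik]
    rw [this, zero_mul]

theorem diagonal_mul_mul_Xmat_eq_zero
    (h4 : ¬ ∃ i j k l : Fin n,
      (i, j) ∈ J ∧ (j, k) ∈ J ∧ (k, l) ∈ J ∧ φ (i, j) ≠ 0 ∧ φ (k, l) ≠ 0)
    {d : Fin n → F} (hd : ∀ k, d k ≠ 0 → ∃ i, (i, k) ∈ J ∧ φ (i, k) ≠ 0)
    {W : Matrix (Fin n) (Fin n) F} (hW : W ∈ nJset J) :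
    diagonal d * W * Xmat J φ = 0 := by
  ext k m
  refine (mul_apply (M := diagonal d * W)).trans (Finset.sum_eq_zero fun l _ => ?_)
  rw [diagonal_mul]
  by_contra hne
  obtain ⟨i, hik, hφik⟩ := hd k (left_ne_zero_of_mul (left_ne_zero_of_mul hne))
  have hkl : (k, l) ∈ J := by_contra fun h =>
    right_ne_zero_of_mul (left_ne_zero_of_mul hne) (hW k l h)
  have hX := right_ne_zero_of_mul hne
  have hlm : (l, m) ∈ J := by_contra fun h => hX (by simp [Xmat, h])
  exact h4 ⟨i, k, l, m, hik, hkl, hlm, hφik, by simpa [Xmat, hlm] using hX⟩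

theorem exists_conj_xmat_eq_one_add_Xmat_mul [Fintype F] (hJ : Closed J)
    (h4 : ¬ ∃ i j k l : Fin n,
      (i, j) ∈ J ∧ (j, k) ∈ J ∧ (k, l) ∈ J ∧ φ (i, j) ≠ 0 ∧ φ (k, l) ≠ 0)
    {w : Matrix (Fin n) (Fin n) F} (hw : w ∈ UJ J) :
    ∃ g h : Matrix (Fin n) (Fin n) F,
      g ∈ UJ J ∧ h ∈ UJ J ∧ g * h = 1 ∧ 1 + Xmat J φ * w = g * xmat J φ * h := by
  classical
  set d : Fin n → F := fun k => if ∃ i, (i, k) ∈ J ∧ φ (i, k) ≠ 0 then 1 else 0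
  set W₁ := diagonal d * (w - 1)
  have hW₁ : 1 + W₁ ∈ UJ J := by
    rw [mem_UJ_iff hJ, add_sub_cancel_left]
    intro i j hij
    simp [W₁, diagonal_mul, (mem_UJ_iff hJ).1 hw i j hij]
  obtain ⟨k, hk, -, hkW₁⟩ := exists_inv_mem_UJ hJ hW₁
  have hXd : Xmat J φ * diagonal d = Xmat J φ :=
    Xmat_mul_diagonal fun i j hij hφ => if_pos ⟨i, hij, hφ⟩
  have hW₁X : W₁ * Xmat J φ = 0 :=
    diagonal_mul_mul_Xmat_eq_zero h4 (fun j hj => by_contra fun h => hj (if_neg h))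
      ((mem_UJ_iff hJ).1 hw)
  refine ⟨k, 1 + W₁, hk, hW₁, hkW₁, ?_⟩
  rw [xmat, conj_one_add_eq_one_add_mul (W := w - 1) (by rw [← mul_assoc, hXd]) hW₁X hkW₁,
    add_sub_cancel]

theorem stmt13_general {F : Type*} [Field F] [Fintype F] {n : ℕ}
    (J : Finset (Pr n)) (hJ : Closed J) (φ : Pr n → F)
    (h4 : ¬ ∃ i j k l : Fin n,
      (i, j) ∈ J ∧ (j, k) ∈ J ∧ (k, l) ∈ J ∧ φ (i, j) ≠ 0 ∧ φ (k, l) ≠ 0) :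
    (fun Y => 1 + Y) '' biOrbit J φ =
      {M : Matrix (Fin n) (Fin n) F | ∃ g h : Matrix (Fin n) (Fin n) F,
        g ∈ UJ J ∧ h ∈ UJ J ∧ g * h = 1 ∧ M = g * xmat J φ * h} := by
  ext M
  constructor
  · rintro ⟨_, ⟨u, v, hu, hv, rfl⟩, rfl⟩
    obtain ⟨u', hu', huu', -⟩ := exists_inv_mem_UJ hJ hu
    obtain ⟨g, h, hg, hh, hgh, hconj⟩ :=
      exists_conj_xmat_eq_one_add_Xmat_mul hJ h4 (mul_mem_UJ hJ hv hu)
    refine ⟨u * g, h * u', mul_mem_UJ hJ hu hg, mul_mem_UJ hJ hh hu', ?_, ?_⟩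
    · rw [mul_assoc, ← mul_assoc g, hgh, one_mul, huu']
    · calc 1 + u * Xmat J φ * v = 1 + u * (Xmat J φ * (v * u)) * u' := by
            simp only [mul_assoc, huu', mul_one]
        _ = u * g * xmat J φ * (h * u') := by
            rw [← mul_one_add_mul_of_mul_eq_one huu', hconj]; noncomm_ring
  · rintro ⟨g, h, hg, hh, hgh, rfl⟩
    exact ⟨g * Xmat J φ * h, ⟨g, h, hg, hh, rfl⟩, (mul_one_add_mul_of_mul_eq_one hgh _).symm⟩

theorem stmt13 {F : Type*} [Field F] [Fintype F] [DecidableEq F] {n : ℕ}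
    (J : Finset (Pr n)) (hJ : Closed J) (φ : Pr n → F)
    (h4 : ¬ ∃ i j k l : Fin n,
      (i, j) ∈ J ∧ (j, k) ∈ J ∧ (k, l) ∈ J ∧ φ (i, j) ≠ 0 ∧ φ (k, l) ≠ 0) :
    (fun Y => 1 + Y) '' biOrbit J φ =
      {M : Matrix (Fin n) (Fin n) F | ∃ g h : Matrix (Fin n) (Fin n) F,
        g ∈ UJ J ∧ h ∈ UJ J ∧ g * h = 1 ∧ M = g * xmat J φ * h} :=
  stmt13_general J hJ φ h4

end SCT
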